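/- arXiv:1706.08066 — 4 statements merged into one kernel-verified Lean document; each statement's English description precedes it below -/
import Mathlib

section
/- Let R be a commutative ring, I an ideal of R, and φ : N → N' an R-linear map such that I annihilates both ker φ and coker φ. Then for any R-module B, the induced map φ ⊗ B : N ⊗_R B → N' ⊗_R B satisfies I² · ker(φ ⊗ B) = 0 and I · coker(φ ⊗ B) = 0. -/
open TensorProduct

/-!
STATEMENT 0 (Remark `notzero`, first part): if `I` annihilates `ker φ` and `coker φ`
(the latter phrased as `I • N' ⊆ range φ`), then for any `R`-module `B` the induced map
`φ ⊗ B = TensorProduct.map φ id` has kernel annihilated by `I²` and cokernel annihilated by `I`.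
-/
theorem stmt0 {R : Type*} [CommRing R] (I : Ideal R)
    {N N' B : Type*} [AddCommGroup N] [AddCommGroup N'] [AddCommGroup B]
    [Module R N] [Module R N'] [Module R B]
    (φ : N →ₗ[R] N')
    (hker : ∀ a ∈ I, ∀ x ∈ LinearMap.ker φ, a • x = 0)
    (hcoker : ∀ a ∈ I, ∀ y : N', a • y ∈ LinearMap.range φ) :
    (∀ a ∈ I * I, ∀ x ∈ LinearMap.ker
        (TensorProduct.map φ (LinearMap.id : B →ₗ[R] B)), a • x = 0) ∧
    (∀ a ∈ I, ∀ y : N' ⊗[R] B, a • y ∈ LinearMap.range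
        (TensorProduct.map φ (LinearMap.id : B →ₗ[R] B))) := by
  constructor
  · -- kernel part
    intro c hc x hx
    have key : ∀ a ∈ I, ∀ b ∈ I, (a * b) • x = 0 := by
      intro a ha b hb
      -- α : N' → range φ, y ↦ a • y
      set α : N' →ₗ[R] LinearMap.range φ :=
        LinearMap.codRestrict (LinearMap.range φ) (a • LinearMap.id)
          (fun y => hcoker a ha y) with hα
      -- γ : range φ → N with γ ∘ rangeRestrict = b • id
      have hle : LinearMap.ker φ ≤ LinearMap.ker ((b • LinearMap.id : N →ₗ[R] N)) := by
        intro n hn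
        simpa using hker b hb n hn
      set γ : LinearMap.range φ →ₗ[R] N :=
        (Submodule.liftQ (LinearMap.ker φ) (b • LinearMap.id) hle) ∘ₗ
          (φ.quotKerEquivRange.symm : LinearMap.range φ →ₗ[R] N ⧸ LinearMap.ker φ) with hγ
      have hcomp : (γ ∘ₗ α) ∘ₗ φ = (a * b) • (LinearMap.id : N →ₗ[R] N) := by
        ext n
        have h1 : α (φ n) = φ.rangeRestrict (a • n) := by
          apply Subtype.ext
          simp [hα]
        have h2 : φ.quotKerEquivRange.symm (φ.rangeRestrict (a • n)) =
            Submodule.Quotient.mk (a • n) := by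
          rw [LinearEquiv.symm_apply_eq]
          rfl
        simp only [LinearMap.comp_apply, LinearMap.smul_apply, LinearMap.id_apply, h1, hγ,
          LinearEquiv.coe_coe, h2]
        rw [Submodule.liftQ_apply]
        simp [smul_smul, mul_comm]
      have : (a * b) • x = TensorProduct.map ((γ ∘ₗ α) ∘ₗ φ)
          (LinearMap.id : B →ₗ[R] B) x := by
        rw [hcomp]
        rw [show ((a * b) • (LinearMap.id : N →ₗ[R] N)) =
          (a * b) • (LinearMap.id : N →ₗ[R] N) from rfl]
        rw [TensorProduct.map_smul_left, TensorProduct.map_id]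
        rfl
      rw [this, show (LinearMap.id : B →ₗ[R] B) = LinearMap.id ∘ₗ LinearMap.id from rfl,
        TensorProduct.map_comp, LinearMap.comp_apply, hx, map_zero]
    refine Submodule.mul_induction_on hc (fun a ha b hb => key a ha b hb) ?_
    intro r s hr hs
    rw [add_smul, hr, hs, add_zero]
  · -- cokernel part
    intro a ha y
    induction y using TensorProduct.induction_on with
    | zero => simp
    | tmul n' b =>
      obtain ⟨n, hn⟩ := hcoker a ha n'
      exact ⟨n ⊗ₜ b, by simp [← hn, TensorProduct.smul_tmul']⟩
    | add y1 y2 h1 h2 =>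
      rw [smul_add]
      exact Submodule.add_mem _ h1 h2
end

section
/- There exist a commutative ring R, an ideal I, an R-linear map φ : N → N' and an R-module B such that I annihilates ker φ and coker φ, but I does not annihilate ker(φ ⊗ B). Concretely: let R = k[a,b,c]/(a², ab) for a field k, I = (a), φ : R² → R given by φ(e₁) = a, φ(e₂) = b, and B = R/(ac+bc); then (c,c) ∈ ker(φ ⊗ B) but I·(c,c) ≠ 0 in B². -/
set_option synthInstance.maxHeartbeats 1000000
set_option maxHeartbeats 1000000

/-!
STATEMENT 1 (Example 4.2): `R = k[a,b,c]/(a²,ab)`, `I = (a)`,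
`φ : R² → R`, `φ(e₁) = a`, `φ(e₂) = b`, `B = R/(ac+bc)`.  Then `I` annihilates `ker φ`
and `coker φ`, the element `(c,c) ⊗ 1` lies in `ker (φ ⊗ B)`, but `I` does not
annihilate it.
-/

open MvPolynomial TensorProduct

noncomputable section

variable (k : Type) [Field k]

/-- the ideal `(a², ab)` of `k[a,b,c]` (with `a = X 0`, `b = X 1`, `c = X 2`). -/
def Jex : Ideal (MvPolynomial (Fin 3) k) :=
  Ideal.span {(X 0 : MvPolynomial (Fin 3) k) ^ 2, X 0 * X 1}

/-- `R = k[a,b,c]/(a²,ab)`. -/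
def Rex := MvPolynomial (Fin 3) k ⧸ Jex k

instance : CommRing (Rex k) := by unfold Rex; infer_instance

def aex : Rex k := Ideal.Quotient.mk (Jex k) (X 0)
def bex : Rex k := Ideal.Quotient.mk (Jex k) (X 1)
def cex : Rex k := Ideal.Quotient.mk (Jex k) (X 2)

/-- `φ : R² → R` with `φ(e₁) = a`, `φ(e₂) = b`. -/
def φex : (Rex k × Rex k) →ₗ[Rex k] Rex k :=
  LinearMap.coprod (LinearMap.toSpanSingleton (Rex k) (Rex k) (aex k))
    (LinearMap.toSpanSingleton (Rex k) (Rex k) (bex k))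

/-- `B = R/(ac+bc)`. -/
def Bex := Rex k ⧸ Ideal.span {aex k * cex k + bex k * cex k}

instance : CommRing (Bex k) := by unfold Bex; infer_instance
instance : Module (Rex k) (Bex k) := by unfold Bex; infer_instance

/-!
Modulo `(a², ab)`, a relation `x a + y b = 0` lifts to `a ∣ y b`, so `a ∣ y` because `a` is prime
and `a ∤ b`; then `a x` and `a y` already lie in `(a², ab)`. Hence `a` kills `ker φ`, and it kills
`coker φ = R/(a, b)` trivially. Over `B`, `φ(c, c) = ac + bc = 0`, but the first projection sends
`a • ((c, c) ⊗ 1)` to `ac ∈ B`, which is nonzero: `a ↦ ε, b ↦ -ε, c ↦ 1` defines a map from `R`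
to the dual numbers `k[ε]` which kills `ac + bc` but not `ac`.
-/

open Ideal in
theorem mul_mem_span_sq_mul_of_add_mem {S : Type*} [CommRing S] {a b p q : S}
    (ha : Prime a) (hab : ¬ a ∣ b) (h : p * a + q * b ∈ span {a ^ 2, a * b}) :
    a * p ∈ span {a ^ 2, a * b} ∧ a * q ∈ span {a ^ 2, a * b} := by
  have hle : span {a ^ 2, a * b} ≤ span {a} := by
    rw [span_le]
    rintro x (rfl | rfl) <;> simp [mem_span_singleton]
  obtain ⟨q', rfl⟩ : a ∣ q := by
    have : a ∣ q * b := (dvd_add_right (dvd_mul_left a p)).mp (mem_span_singleton.mp (hle h))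
    exact (ha.dvd_or_dvd this).resolve_right hab
  constructor
  · rw [show a * p = (p * a + a * q' * b) - a * b * q' by ring]
    exact sub_mem h (mul_mem_right _ _ (subset_span (by simp)))
  · rw [← mul_assoc, ← pow_two]
    exact mul_mem_right _ _ (subset_span (by simp))

open Ideal Quotient in
theorem Ideal.Quotient.mk_mul_eq_zero_of_add_eq_zero {S : Type*} [CommRing S] {a b : S}
    (ha : Prime a) (hab : ¬ a ∣ b) {x y : S ⧸ span {a ^ 2, a * b}}
    (h : x * mk _ a + y * mk _ b = 0) : mk _ a * x = 0 ∧ mk _ a * y = 0 := by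
  obtain ⟨p, rfl⟩ := mk_surjective x
  obtain ⟨q, rfl⟩ := mk_surjective y
  simp only [← map_mul, ← map_add, eq_zero_iff_mem] at h ⊢
  exact mul_mem_span_sq_mul_of_add_mem ha hab h

theorem TensorProduct.smul_tmul_ne_zero_of_smul_ne_zero {R M N : Type*} [CommSemiring R]
    [AddCommMonoid M] [Module R M] [AddCommMonoid N] [Module R N] (f : M →ₗ[R] R)
    {r : R} {m : M} {n : N} (h : (r * f m) • n ≠ 0) : r • (m ⊗ₜ[R] n) ≠ 0 := by
  intro h0
  apply h
  simpa [mul_smul] using congrArg (TensorProduct.lid R N ∘ LinearMap.rTensor N f) h0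

theorem φex_apply (x : Rex k × Rex k) : φex k x = x.1 * aex k + x.2 * bex k := by
  simp [φex]

theorem aex_smul_eq_zero_of_mem_ker {x : Rex k × Rex k} (hx : x ∈ LinearMap.ker (φex k)) :
    aex k • x = 0 := by
  rw [LinearMap.mem_ker, φex_apply] at hx
  obtain ⟨h1, h2⟩ := Ideal.Quotient.mk_mul_eq_zero_of_add_eq_zero
    (MvPolynomial.X_prime (i := (0 : Fin 3)) (R := k)) (by simp) hx
  exact Prod.ext h1 h2

theorem Bex.smul_one_eq_zero_iff (r : Rex k) :
    r • (1 : Bex k) = 0 ↔ r ∈ Ideal.span {aex k * cex k + bex k * cex k} := by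
  rw [← Ideal.Quotient.eq_zero_iff_mem, ← mul_one (Ideal.Quotient.mk _ r)]
  rfl

section

open DualNumber

def dualEval : Rex k →+* DualNumber k :=
  Ideal.Quotient.lift (Jex k) (aeval (![ε, -ε, 1] : Fin 3 → DualNumber k)).toRingHom
    fun _ hx => (Ideal.span_le.mpr (by rintro x (rfl | rfl) <;> simp [sq]) :
      Jex k ≤ RingHom.ker _) hx

theorem dualEval_mk (p : MvPolynomial (Fin 3) k) :
    dualEval k (Ideal.Quotient.mk (Jex k) p) = aeval (![ε, -ε, 1] : Fin 3 → DualNumber k) p :=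
  Ideal.Quotient.lift_mk _ _ _

theorem dualEval_aex : dualEval k (aex k) = ε := by simp [aex, dualEval_mk]

theorem dualEval_bex : dualEval k (bex k) = -ε := by simp [bex, dualEval_mk]

theorem dualEval_cex : dualEval k (cex k) = 1 := by simp [cex, dualEval_mk]

end

theorem aex_mul_cex_notMem_span :
    aex k * cex k ∉ Ideal.span {aex k * cex k + bex k * cex k} := by
  intro h
  obtain ⟨t, ht⟩ := Ideal.mem_span_singleton'.mp h
  have := congrArg (dualEval k) ht
  simp only [map_mul, map_add, dualEval_aex, dualEval_bex, dualEval_cex, mul_one,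
    add_neg_cancel, mul_zero] at this
  simpa using congrArg TrivSqZeroExt.snd this

theorem stmt1 :
    (∀ r ∈ Ideal.span {aex k}, ∀ x ∈ LinearMap.ker (φex k), r • x = 0) ∧
    (∀ r ∈ Ideal.span {aex k}, ∀ y : Rex k, r • y ∈ LinearMap.range (φex k)) ∧
    TensorProduct.map (φex k) (LinearMap.id : Bex k →ₗ[Rex k] Bex k)
      (((cex k, cex k) : Rex k × Rex k) ⊗ₜ[Rex k] (1 : Bex k)) = 0 ∧
    aex k • (((cex k, cex k) : Rex k × Rex k) ⊗ₜ[Rex k] (1 : Bex k)) ≠ 0 := by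
  refine ⟨?_, ?_, ?_, ?_⟩
  · rintro r hr x hx
    obtain ⟨t, rfl⟩ := Ideal.mem_span_singleton'.mp hr
    rw [← smul_smul, aex_smul_eq_zero_of_mem_ker k hx, smul_zero]
  · rintro r hr y
    obtain ⟨t, rfl⟩ := Ideal.mem_span_singleton'.mp hr
    exact ⟨(t * y, 0), by rw [φex_apply, smul_eq_mul]; ring⟩
  · have hrel : (aex k * cex k + bex k * cex k) • (1 : Bex k) = 0 :=
      (Bex.smul_one_eq_zero_iff k _).mpr (Ideal.mem_span_singleton_self _)
    calc _ = ((aex k * cex k + bex k * cex k) • (1 : Rex k)) ⊗ₜ[Rex k] (1 : Bex k) := by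
          rw [map_tmul, LinearMap.id_apply, φex_apply, smul_eq_mul, mul_one]
          congr 1
          ring
      _ = 0 := by rw [smul_tmul, hrel, tmul_zero]
  · refine smul_tmul_ne_zero_of_smul_ne_zero (LinearMap.fst _ _ _) ?_
    rw [Ne, LinearMap.fst_apply, Bex.smul_one_eq_zero_iff]
    exact aex_mul_cex_notMem_span k

end
end

section
/- Let R be a commutative ring and I an ideal. An R-linear map φ : N → N' is an I-approximation if and only if there exist an R-module Q and submodules M ⊆ P ⊆ Q, M' ⊆ P' ⊆ Q with I·M' ⊆ M ⊆ M', I·P' ⊆ P ⊆ P', together with isomorphisms N ≅ P/M and P'/M' ≅ N' such that φ corresponds under these isomorphisms to the map P/M → P'/M' induced by the inclusions P ⊆ P' and M ⊆ M'. -/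
universe u v w

/-- `φ : N → N'` is an *`I`-approximation* (Definition 4.3 of the paper) if it factors as
`β ∘ α` through some module `Z`, with `α` injective, `β` surjective,
`I · coker α = 0` (i.e. `I • Z ⊆ range α`) and `I · ker β = 0`. -/
def IsIApprox {R : Type u} [CommRing R] (I : Ideal R)
    {N : Type v} {N' : Type w} [AddCommGroup N] [AddCommGroup N']
    [Module R N] [Module R N'] (φ : N →ₗ[R] N') : Prop :=
  ∃ (Z : Type (max v w)) (_ : AddCommGroup Z) (_ : Module R Z)
    (α : N →ₗ[R] Z) (β : Z →ₗ[R] N'),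
      Function.Injective α ∧ Function.Surjective β ∧ β ∘ₗ α = φ ∧
      (∀ a ∈ I, ∀ z : Z, a • z ∈ LinearMap.range α) ∧
      (∀ a ∈ I, ∀ z ∈ LinearMap.ker β, a • z = 0)

/-! An `I`-approximation `N ↪ Z ↠ N'` is itself a subquotient picture, with `Q = Z`,
`M = 0`, `P = range α`, `M' = ker β` and `P' = Z`. Conversely, subquotient data factor `φ` through
`Z = P'/M` as `P/M ↪ P'/M ↠ P'/M'`; the cokernel of the first map is `P'/P` and the kernel of the
second is `M'/M`, both killed by `I`. -/

open Submodule LinearMap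

section Subquotients

variable {R X Y : Type*} [Ring R] [AddCommGroup X] [Module R X] [AddCommGroup Y] [Module R Y]

theorem Submodule.mapQ_inclusion_comap_injective {P P' : Submodule R X} (h : P ≤ P')
    (M : Submodule R X) :
    Function.Injective
      (mapQ (M.comap P.subtype) (M.comap P'.subtype) (inclusion h) fun _ hz => hz) := by
  refine (injective_iff_map_eq_zero _).2 fun z hz => ?_
  obtain ⟨x, rfl⟩ := Submodule.Quotient.mk_surjective _ z
  change Submodule.Quotient.mk (inclusion h x) = 0 at hz
  rw [Submodule.Quotient.mk_eq_zero] at hz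
  exact (Submodule.Quotient.mk_eq_zero _).2 hz

theorem Submodule.smul_mem_range_mapQ {f : X →ₗ[R] Y} {p : Submodule R X} {q : Submodule R Y}
    (h : p ≤ q.comap f) {r : R} (hr : ∀ y, r • y ∈ range f) (z : Y ⧸ q) :
    r • z ∈ range (mapQ p q f h) := by
  obtain ⟨y, rfl⟩ := Submodule.Quotient.mk_surjective q z
  obtain ⟨x, hx⟩ := hr y
  exact ⟨Submodule.Quotient.mk x, by rw [mapQ_apply, hx, Submodule.Quotient.mk_smul]⟩

theorem Submodule.smul_eq_zero_of_mem_ker_factor {p p' : Submodule R X} (h : p ≤ p') {r : R}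
    (hr : ∀ x ∈ p', r • x ∈ p) {z : X ⧸ p} (hz : z ∈ ker (factor h)) : r • z = 0 := by
  obtain ⟨x, rfl⟩ := Submodule.Quotient.mk_surjective p z
  change Submodule.Quotient.mk x = 0 at hz
  rw [Submodule.Quotient.mk_eq_zero] at hz
  rw [← Submodule.Quotient.mk_smul, Submodule.Quotient.mk_eq_zero]
  exact hr x hz

end Subquotients

section Presentation

variable {R N N' Z : Type*} [CommRing R] [AddCommGroup N] [Module R N] [AddCommGroup N']
  [Module R N'] [AddCommGroup Z] [Module R Z]

noncomputable def LinearEquiv.ofInjectiveQuotBot {α : N →ₗ[R] Z} (hα : Function.Injective α) :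
    N ≃ₗ[R] (range α ⧸ (⊥ : Submodule R Z).comap (range α).subtype) :=
  (LinearEquiv.ofInjective α hα).trans (quotEquivOfEqBot _ (by simp)).symm

noncomputable def LinearMap.topQuotKerEquivOfSurjective {β : Z →ₗ[R] N'}
    (hβ : Function.Surjective β) :
    (↥(⊤ : Submodule R Z) ⧸ (ker β).comap (⊤ : Submodule R Z).subtype) ≃ₗ[R] N' :=
  (quotEquivOfEq _ _ (ker_comp _ _).symm).trans
    ((β ∘ₗ (⊤ : Submodule R Z).subtype).quotKerEquivOfSurjective
      (hβ.comp fun z => ⟨⟨z, trivial⟩, rfl⟩))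

end Presentation

/-- Proposition 4.4: `φ : N → N'` is an `I`-approximation iff there are a module
`Q` and submodules `M ⊆ P`, `M' ⊆ P'` of `Q` with `I·M' ⊆ M ⊆ M'` and `I·P' ⊆ P ⊆ P'`, and
isomorphisms `N ≅ P/M`, `P'/M' ≅ N'` under which `φ` corresponds to the map `P/M → P'/M'`
induced by the inclusions. -/
theorem stmt5 {R : Type u} [CommRing R] (I : Ideal R)
    {N : Type v} {N' : Type w} [AddCommGroup N] [AddCommGroup N']
    [Module R N] [Module R N'] (φ : N →ₗ[R] N') :
    IsIApprox I φ ↔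
      ∃ (Q : Type (max v w)) (_ : AddCommGroup Q) (_ : Module R Q)
        (M P M' P' : Submodule R Q)
        (hMP : M ≤ P) (hMP' : M' ≤ P') (hMM' : M ≤ M') (hPP' : P ≤ P'),
        (∀ a ∈ I, ∀ x ∈ M', a • x ∈ M) ∧
        (∀ a ∈ I, ∀ x ∈ P', a • x ∈ P) ∧
        ∃ (eN : N ≃ₗ[R] (↥P ⧸ M.comap P.subtype))
          (eN' : (↥P' ⧸ M'.comap P'.subtype) ≃ₗ[R] N'),
          ∀ x : N,
            eN' (Submodule.mapQ (M.comap P.subtype) (M'.comap P'.subtype)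
              (Submodule.inclusion hPP')
              (by intro z hz; exact hMM' hz) (eN x)) = φ x := by
  constructor
  · rintro ⟨Z, _, _, α, β, hα, hβ, rfl, hIα, hIβ⟩
    exact ⟨Z, _, _, ⊥, range α, ker β, ⊤, bot_le, le_top, bot_le, le_top,
      fun a ha x hx => (mem_bot R).2 (hIβ a ha x hx), fun a ha x _ => hIα a ha x,
      LinearEquiv.ofInjectiveQuotBot hα, topQuotKerEquivOfSurjective hβ, fun _ => rfl⟩
  · rintro ⟨Q, _, _, M, P, M', P', -, -, hMM', hPP', hIM, hIP, eN, eN', hφ⟩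
    have hM : M.comap P'.subtype ≤ M'.comap P'.subtype := comap_mono hMM'
    refine ⟨P' ⧸ M.comap P'.subtype, _, _,
      mapQ (M.comap P.subtype) _ (inclusion hPP') (fun _ hz => hz) ∘ₗ eN.toLinearMap,
      eN'.toLinearMap ∘ₗ factor hM,
      (mapQ_inclusion_comap_injective hPP' M).comp eN.injective,
      eN'.surjective.comp (factor_surjective hM), ?_,
      fun a ha z => ?_, fun a ha z hz => ?_⟩
    · ext x
      rw [← hφ x]
      obtain ⟨y, hy⟩ := Submodule.Quotient.mk_surjective _ (eN x)
      simp only [comp_apply, LinearEquiv.coe_coe, ← hy]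
      rfl
    · rw [LinearEquiv.range_comp]
      exact smul_mem_range_mapQ _ (fun y => ⟨⟨a • y, hIP a ha y y.2⟩, rfl⟩) z
    · rw [LinearEquiv.ker_comp] at hz
      exact smul_eq_zero_of_mem_ker_factor hM (fun x hx => hIM a ha x hx) hz
end

section
/- Let R be a commutative ring, I an ideal, and φ : N → N' an I-approximation. Then for every R-module B, the induced map φ ⊗ B : N ⊗_R B → N' ⊗_R B is an I-approximation; in particular I·ker(φ ⊗ B) = 0 and I·coker(φ ⊗ B) = 0. -/
universe u v w

open TensorProduct

/-! Choose a free module `F ↠ B`. Since `F` is flat, `α ⊗ F` stays injective,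
and the quotient of `Z ⊗ F` by the image of `ker (N ⊗ F → N ⊗ B)` is a module through which
`φ ⊗ B` factors. Both torsion conditions come from a single map `ν : N' → N` with
`α ∘ ν ∘ β = a • id` for each `a ∈ I`, which tensors with `F` without losing anything. -/

namespace IsIApprox

variable {R : Type u} [CommRing R] {I : Ideal R} {N : Type v} {N' : Type w}
  [AddCommGroup N] [AddCommGroup N'] [Module R N] [Module R N'] {φ : N →ₗ[R] N'}

theorem smul_eq_zero_of_mem_ker (hφ : IsIApprox I φ) {a : R} (ha : a ∈ I) {x : N}
    (hx : x ∈ LinearMap.ker φ) : a • x = 0 := by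
  obtain ⟨Z, _, _, α, β, hα, -, rfl, -, hker⟩ := hφ
  apply hα
  rw [map_smul, map_zero]
  exact hker a ha (α x) hx

theorem smul_mem_range (hφ : IsIApprox I φ) {a : R} (ha : a ∈ I) (y : N') :
    a • y ∈ LinearMap.range φ := by
  obtain ⟨Z, _, _, α, β, -, hβ, rfl, hcok, -⟩ := hφ
  obtain ⟨z, rfl⟩ := hβ y
  obtain ⟨x, hx⟩ := hcok a ha z
  exact ⟨x, by rw [LinearMap.comp_apply, hx, map_smul]⟩

end IsIApprox

theorem LinearMap.exists_comp_comp_eq_smul_id {R N Z N' : Type*} [CommRing R] [AddCommGroup N]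
    [AddCommGroup Z] [AddCommGroup N'] [Module R N] [Module R Z] [Module R N'] {α : N →ₗ[R] Z} {β : Z →ₗ[R] N'}
    (hα : Function.Injective α) (hβ : Function.Surjective β) {a : R}
    (hcok : ∀ z, a • z ∈ LinearMap.range α) (hker : ∀ z ∈ LinearMap.ker β, a • z = 0) :
    ∃ ν : N' →ₗ[R] N, α ∘ₗ ν ∘ₗ β = a • LinearMap.id := by
  let μ : Z →ₗ[R] N := (LinearEquiv.ofInjective α hα).symm.toLinearMap ∘ₗ
    (a • LinearMap.id).codRestrict (LinearMap.range α) hcok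
  have hμ : ∀ z, α (μ z) = a • z := fun z => LinearEquiv.ofInjective_symm_apply (h := hα) α _
  have hle : LinearMap.ker β ≤ LinearMap.ker μ := fun z hz =>
    hα (by rw [hμ, hker z hz, map_zero])
  refine ⟨(LinearMap.ker β).liftQ μ hle ∘ₗ (β.quotKerEquivOfSurjective hβ).symm.toLinearMap, ?_⟩
  ext z
  simp [hμ]

universe p q

theorem isIApprox_of_comp_eq_comp {R : Type u} [CommRing R] (I : Ideal R) {M : Type*}
    {P : Type p} {P' : Type q} {Q : Type (max p q)} [AddCommGroup M] [AddCommGroup P]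
    [AddCommGroup P'] [AddCommGroup Q] [Module R M] [Module R P] [Module R P'] [Module R Q]
    {f : M →ₗ[R] Q} {g : M →ₗ[R] P} {h : Q →ₗ[R] P'} {ψ : P →ₗ[R] P'}
    (hf : Function.Injective f) (hg : Function.Surjective g) (hh : Function.Surjective h)
    (hcomm : h ∘ₗ f = ψ ∘ₗ g) (hcok : ∀ a ∈ I, ∀ y, a • y ∈ LinearMap.range f)
    (hker : ∀ a ∈ I, ∀ y ∈ LinearMap.ker h, a • y ∈ (LinearMap.ker g).map f) :
    IsIApprox I ψ := by
  -- `Q ⧸ f (ker g)` is the pushout of `f` along the surjection `g`.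
  set K := (LinearMap.ker g).map f
  have hK : LinearMap.ker g ≤ LinearMap.ker (K.mkQ ∘ₗ f) := fun x hx => by
    simpa using Submodule.mem_map_of_mem hx
  have hKh : K ≤ LinearMap.ker h := by
    rintro _ ⟨x, hx, rfl⟩
    rw [LinearMap.mem_ker, ← LinearMap.comp_apply, hcomm, LinearMap.comp_apply, hx, map_zero]
  let α := (LinearMap.ker g).liftQ (K.mkQ ∘ₗ f) hK ∘ₗ
    (g.quotKerEquivOfSurjective hg).symm.toLinearMap
  have hα : ∀ x, α (g x) = K.mkQ (f x) := fun x => by simp [α]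
  refine ⟨Q ⧸ K, inferInstance, inferInstance, α, K.liftQ h hKh, ?_, ?_, ?_, ?_, ?_⟩
  · refine (injective_iff_map_eq_zero α).mpr fun y hy => ?_
    obtain ⟨x, rfl⟩ := hg y
    rw [hα, Submodule.mkQ_apply, Submodule.Quotient.mk_eq_zero, ← Submodule.mem_comap,
      Submodule.comap_map_eq_of_injective hf] at hy
    exact hy
  · rw [← LinearMap.range_eq_top, Submodule.range_liftQ, LinearMap.range_eq_top]
    exact hh
  · ext y
    obtain ⟨x, rfl⟩ := hg y
    rw [LinearMap.comp_apply, hα, Submodule.mkQ_apply, Submodule.liftQ_apply,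
      ← LinearMap.comp_apply, hcomm, LinearMap.comp_apply]
  · intro a ha z
    obtain ⟨y, rfl⟩ := K.mkQ_surjective z
    obtain ⟨x, hx⟩ := hcok a ha y
    exact ⟨g x, by rw [hα, hx, map_smul]⟩
  · intro a ha z hz
    obtain ⟨y, rfl⟩ := K.mkQ_surjective z
    rw [LinearMap.mem_ker, Submodule.mkQ_apply, Submodule.liftQ_apply] at hz
    rw [← map_smul, Submodule.mkQ_apply, Submodule.Quotient.mk_eq_zero]
    exact hker a ha y hz

theorem IsIApprox.map_id {R : Type u} [CommRing R] {I : Ideal R} {N : Type v} {N' : Type w}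
    [AddCommGroup N] [AddCommGroup N'] [Module R N] [Module R N'] {φ : N →ₗ[R] N'}
    (hφ : IsIApprox I φ) (B : Type u) [AddCommGroup B] [Module R B] :
    IsIApprox I (TensorProduct.map φ (LinearMap.id : B →ₗ[R] B)) := by
  obtain ⟨Z, _, _, α, β, hα, hβ, rfl, hcok, hker⟩ := hφ
  let F := B →₀ R
  let π : F →ₗ[R] B := Finsupp.linearCombination R id
  have hπ : Function.Surjective π := Finsupp.linearCombination_id_surjective R B
  have hsplit : ∀ a ∈ I, ∃ κ : Z ⊗[R] F →ₗ[R] N ⊗[R] F, α.rTensor F ∘ₗ κ = a • LinearMap.id ∧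
      ∀ y ∈ LinearMap.ker (TensorProduct.map β π), κ y ∈ LinearMap.ker (π.lTensor N) := by
    intro a ha
    obtain ⟨ν, hν⟩ := LinearMap.exists_comp_comp_eq_smul_id hα hβ (hcok a ha) (hker a ha)
    refine ⟨(ν ∘ₗ β).rTensor F, ?_, fun y hy => ?_⟩
    · rw [← LinearMap.rTensor_comp, hν, LinearMap.rTensor_smul, LinearMap.rTensor_id]
    · have : π.lTensor N ∘ₗ (ν ∘ₗ β).rTensor F = ν.rTensor B ∘ₗ TensorProduct.map β π :=
        TensorProduct.ext' fun z x => by simp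
      rw [LinearMap.mem_ker, ← LinearMap.comp_apply, this, LinearMap.comp_apply,
        LinearMap.mem_ker.mp hy, map_zero]
  refine isIApprox_of_comp_eq_comp I (Module.Flat.rTensor_preserves_injective_linearMap α hα)
    (LinearMap.lTensor_surjective N hπ) (TensorProduct.map_surjective hβ hπ) ?_ ?_ ?_
  · exact TensorProduct.ext' fun x y => by simp
  · intro a ha y
    obtain ⟨κ, hκ, -⟩ := hsplit a ha
    exact ⟨κ y, LinearMap.congr_fun hκ y⟩
  · intro a ha y hy
    obtain ⟨κ, hκ, hκker⟩ := hsplit a ha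
    exact ⟨κ y, hκker y hy, LinearMap.congr_fun hκ y⟩

/-- Lemma 4.9(ii) and Corollary 4.10: if `φ` is an `I`-approximation then so is
`φ ⊗ B` for every module `B`; in particular `I · ker (φ ⊗ B) = 0` and `I · coker (φ ⊗ B) = 0`. -/
theorem stmt6 {R : Type u} [CommRing R] (I : Ideal R)
    {N : Type v} {N' : Type w} {B : Type u} [AddCommGroup N] [AddCommGroup N']
    [AddCommGroup B] [Module R N] [Module R N'] [Module R B] (φ : N →ₗ[R] N')
    (h : IsIApprox I φ) :
    IsIApprox I (TensorProduct.map φ (LinearMap.id : B →ₗ[R] B)) ∧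
    (∀ a ∈ I, ∀ x ∈ LinearMap.ker (TensorProduct.map φ (LinearMap.id : B →ₗ[R] B)),
      a • x = 0) ∧
    (∀ a ∈ I, ∀ y : N' ⊗[R] B, a • y ∈ LinearMap.range
      (TensorProduct.map φ (LinearMap.id : B →ₗ[R] B))) := by
  have hB := h.map_id B
  exact ⟨hB, fun _ ha _ hx => hB.smul_eq_zero_of_mem_ker ha hx, fun _ ha => hB.smul_mem_range ha⟩
end
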